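/- (Boundary version of the convergence lemma, used in Step 3 of the proof of Theorem 2.1.) Let (Σ, μ) be a finite measure space and let s_* ≥ 0 be a constant. Suppose {vⁿ} ⊂ L²(Σ; ℝ³) is a sequence converging strongly in L²(Σ; ℝ³) to some v, and set zⁿ := s_* vⁿ/(|vⁿ| + 1/n) a.e. in Σ. If zⁿ converges weakly in L²(Σ; ℝ³) to some z, then (|z| − s_*)⁺ + | |v| z − s_* v | = 0 a.e. in Σ. -/

import Mathlib

/-! The bound `‖zⁿ‖ ≤ s` passes to the weak limit: testing against
`w = ((‖z‖ - s)⁺ / ‖z‖) • z` gives `∫ ((‖z‖ - s)⁺)² ≤ 0`.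
For `‖v‖ • z = s • v`, pass to a subsequence along which `vⁿ → v` a.e. Where `v = 0` the `zⁿ`
need not converge, but the damped sequence `(‖v‖ / (1 + ‖v‖)) • zⁿ` converges a.e. to
`(s / (1 + ‖v‖)) • v`; being bounded, it converges weakly to that limit by dominated
convergence, and uniqueness of weak limits gives `(‖v‖ / (1 + ‖v‖)) • z = (s / (1 + ‖v‖)) • v`. -/

open MeasureTheory Filter
open scoped RealInnerProductSpace Topology ENNReal

/-- `ℝ³` with the Euclidean inner product. -/
abbrev V3 := EuclideanSpace ℝ (Fin 3)

theorem norm_max_sub_div_le_one {a C : ℝ} (ha : 0 ≤ a) (hC : 0 ≤ C) :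
    ‖max (a - C) 0 / a‖ ≤ 1 := by
  rw [Real.norm_of_nonneg (by positivity)]
  exact div_le_one_of_le₀ (max_le (by linarith) ha) ha

theorem norm_div_one_add_le_one {a : ℝ} (ha : 0 ≤ a) : ‖a / (1 + a)‖ ≤ 1 := by
  rw [Real.norm_of_nonneg (by positivity), div_le_one (by positivity)]
  linarith

section Regularization

variable {E : Type*} [NormedAddCommGroup E] [NormedSpace ℝ E]

theorem norm_div_norm_add_smul_le {s ε : ℝ} (hs : 0 ≤ s) (hε : 0 < ε) (y : E) :
    ‖(s / (‖y‖ + ε)) • y‖ ≤ s := by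
  have hpos : 0 < ‖y‖ + ε := by positivity
  rw [norm_smul, Real.norm_of_nonneg (div_nonneg hs hpos.le), div_mul_eq_mul_div,
    div_le_iff₀ hpos]
  nlinarith [norm_nonneg y]

theorem tendsto_smul_div_norm_add_smul {s : ℝ} {y : ℕ → E} {y₀ : E} {ε : ℕ → ℝ}
    (hy : Tendsto y atTop (𝓝 y₀)) (hε : Tendsto ε atTop (𝓝 0)) :
    Tendsto (fun n => (‖y₀‖ / (1 + ‖y₀‖)) • (s / (‖y n‖ + ε n)) • y n) atTop
      (𝓝 ((s / (1 + ‖y₀‖)) • y₀)) := by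
  rcases eq_or_ne y₀ 0 with rfl | hy₀
  · simp
  have hy₀' : ‖y₀‖ ≠ 0 := norm_ne_zero_iff.2 hy₀
  have hscale : Tendsto (fun n => s / (‖y n‖ + ε n)) atTop (𝓝 (s / ‖y₀‖)) :=
    tendsto_const_nhds.div (by simpa using hy.norm.add hε) hy₀'
  convert (hscale.smul hy).const_smul (‖y₀‖ / (1 + ‖y₀‖)) using 2
  rw [smul_smul]
  congr 1
  field_simp

theorem norm_smul_eq_of_div_one_add_norm_smul_eq {s : ℝ} {x y : E}
    (h : (‖y‖ / (1 + ‖y‖)) • x = (s / (1 + ‖y‖)) • y) : ‖y‖ • x = s • y := by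
  have hpos : (1 + ‖y‖) ≠ 0 := by positivity
  have := congrArg ((1 + ‖y‖) • ·) h
  simp only [smul_smul] at this
  rwa [mul_div_cancel₀ _ hpos, mul_div_cancel₀ _ hpos] at this

end Regularization

theorem inner_smul_sub_mul_norm_smul_eq_sq {E : Type*} [NormedAddCommGroup E]
    [InnerProductSpace ℝ E] {C : ℝ} (hC : 0 ≤ C) (y : E) :
    ⟪y, (max (‖y‖ - C) 0 / ‖y‖) • y⟫ - C * ‖(max (‖y‖ - C) 0 / ‖y‖) • y‖
      = max (‖y‖ - C) 0 ^ 2 := by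
  rcases eq_or_ne y 0 with rfl | hy
  · simp [hC]
  have hy' : ‖y‖ ≠ 0 := norm_ne_zero_iff.2 hy
  rw [real_inner_smul_right, real_inner_self_eq_norm_sq, norm_smul,
    Real.norm_of_nonneg (by positivity)]
  field_simp
  rcases le_total (‖y‖ - C) 0 with h | h
  · simp [max_eq_right h]
  · rw [max_eq_left h]; ring

namespace MeasureTheory

variable {S : Type*} [MeasurableSpace S] {μ : Measure S}
  {E : Type*} [NormedAddCommGroup E] [InnerProductSpace ℝ E]

def TendstoWeakL2 {ι : Type*} (l : Filter ι) (z : ι → S → E) (zlim : S → E)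
    (μ : Measure S) : Prop :=
  ∀ w : S → E, MemLp w 2 μ →
    Tendsto (fun n => ∫ x, ⟪z n x, w x⟫ ∂μ) l (𝓝 (∫ x, ⟪zlim x, w x⟫ ∂μ))

theorem MemLp.integrable_inner {f g : S → E} (hf : MemLp f 2 μ) (hg : MemLp g 2 μ) :
    Integrable (fun x => ⟪f x, g x⟫) μ :=
  memLp_one_iff_integrable.1 ((innerSL ℝ (E := E)).memLp_of_bilin 1 hf hg)

theorem MemLp.smul_of_norm_le_one {p : ℝ≥0∞} {f : S → E} {φ : S → ℝ} (hf : MemLp f p μ)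
    (hφ : AEStronglyMeasurable φ μ) (hφ_le : ∀ᵐ x ∂μ, ‖φ x‖ ≤ 1) :
    MemLp (fun x => φ x • f x) p μ :=
  hf.of_le (hφ.smul hf.1) <| hφ_le.mono fun x hx => by
    rw [norm_smul]; exact mul_le_of_le_one_left (norm_nonneg _) hx

theorem ae_eq_of_forall_integral_inner_eq {f g : S → E} (hf : MemLp f 2 μ) (hg : MemLp g 2 μ)
    (h : ∀ w : S → E, MemLp w 2 μ → ∫ x, ⟪f x, w x⟫ ∂μ = ∫ x, ⟪g x, w x⟫ ∂μ) : f =ᵐ[μ] g := by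
  refine (MemLp.toLp_eq_toLp_iff hf hg).1 <| ext_inner_right ℝ fun w => ?_
  simp only [L2.inner_def]
  calc ∫ x, ⟪hf.toLp f x, w x⟫ ∂μ = ∫ x, ⟪f x, w x⟫ ∂μ :=
        integral_congr_ae <| by filter_upwards [hf.coeFn_toLp] with x hx; rw [hx]
    _ = ∫ x, ⟪g x, w x⟫ ∂μ := h w (Lp.memLp w)
    _ = ∫ x, ⟪hg.toLp g x, w x⟫ ∂μ :=
        integral_congr_ae <| by filter_upwards [hg.coeFn_toLp] with x hx; rw [hx]

theorem ae_norm_le_of_forall_integral_inner_le [IsFiniteMeasure μ] {f : S → E} {C : ℝ}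
    (hC : 0 ≤ C) (hf : MemLp f 2 μ)
    (h : ∀ w : S → E, MemLp w 2 μ → ∫ x, ⟪f x, w x⟫ ∂μ ≤ C * ∫ x, ‖w x‖ ∂μ) :
    ∀ᵐ x ∂μ, ‖f x‖ ≤ C := by
  set w : S → E := fun x => (max (‖f x‖ - C) 0 / ‖f x‖) • f x
  have hw : MemLp w 2 μ := by
    have hnorm := hf.1.norm.aemeasurable
    exact hf.smul_of_norm_le_one
      (((hnorm.sub_const C).max aemeasurable_const).div hnorm).aestronglyMeasurable
      (Eventually.of_forall fun x => norm_max_sub_div_le_one (norm_nonneg _) hC)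
  have hint_inner := hf.integrable_inner hw
  have hint_norm := (hw.integrable one_le_two).norm.const_mul C
  have hsq : (fun x => ⟪f x, w x⟫ - C * ‖w x‖) = fun x => max (‖f x‖ - C) 0 ^ 2 :=
    funext fun x => inner_smul_sub_mul_norm_smul_eq_sq hC (f x)
  have hzero : ∫ x, max (‖f x‖ - C) 0 ^ 2 ∂μ = 0 := by
    refine le_antisymm ?_ (integral_nonneg fun x => sq_nonneg _)
    rw [← hsq, integral_sub hint_inner hint_norm, integral_const_mul]
    exact sub_nonpos.2 (h w hw)
  filter_upwards [(integral_eq_zero_iff_of_nonneg (fun x => sq_nonneg _)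
    (hsq ▸ hint_inner.sub hint_norm)).1 hzero] with x hx
  simpa [sub_nonpos] using hx

namespace TendstoWeakL2

theorem comp {ι κ : Type*} {l : Filter ι} {l' : Filter κ} {z : ι → S → E} {zlim : S → E}
    {f : κ → ι} (hweak : TendstoWeakL2 l z zlim μ) (hf : Tendsto f l' l) :
    TendstoWeakL2 l' (fun i => z (f i)) zlim μ :=
  fun w hw => (hweak w hw).comp hf

theorem integral_inner_le {ι : Type*} {l : Filter ι} [l.NeBot] [IsFiniteMeasure μ]
    {z : ι → S → E} {zlim : S → E} {C : ℝ} (hweak : TendstoWeakL2 l z zlim μ)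
    (hz : ∀ n, MemLp (z n) 2 μ) (hz_le : ∀ n, ∀ᵐ x ∂μ, ‖z n x‖ ≤ C)
    {w : S → E} (hw : MemLp w 2 μ) :
    ∫ x, ⟪zlim x, w x⟫ ∂μ ≤ C * ∫ x, ‖w x‖ ∂μ := by
  refine le_of_tendsto (hweak w hw) (Eventually.of_forall fun n => ?_)
  rw [← integral_const_mul]
  refine integral_mono_ae ((hz n).integrable_inner hw)
    ((hw.integrable one_le_two).norm.const_mul C) ?_
  filter_upwards [hz_le n] with x hx
  exact (real_inner_le_norm _ _).trans (mul_le_mul_of_nonneg_right hx (norm_nonneg _))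

theorem ae_smul_eq_of_tendsto [IsFiniteMeasure μ] {z : ℕ → S → E}
    {zlim h : S → E} {φ : S → ℝ} {C : ℝ} (hweak : TendstoWeakL2 atTop z zlim μ)
    (hz : ∀ n, MemLp (z n) 2 μ) (hzlim : MemLp zlim 2 μ) (hz_le : ∀ n, ∀ᵐ x ∂μ, ‖z n x‖ ≤ C)
    (hφ : AEStronglyMeasurable φ μ) (hφ_le : ∀ᵐ x ∂μ, ‖φ x‖ ≤ 1)
    (hlim : ∀ᵐ x ∂μ, Tendsto (fun n => φ x • z n x) atTop (𝓝 (h x))) :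
    (fun x => φ x • zlim x) =ᵐ[μ] h := by
  have hφz_le : ∀ n, ∀ᵐ x ∂μ, ‖φ x • z n x‖ ≤ C := fun n => by
    filter_upwards [hz_le n, hφ_le] with x hzx hφx
    rw [norm_smul]
    exact (mul_le_of_le_one_left (norm_nonneg _) hφx).trans hzx
  have hh : MemLp h 2 μ := by
    refine MemLp.of_bound (aestronglyMeasurable_of_tendsto_ae atTop
      (fun n => hφ.smul (hz n).1) hlim) C ?_
    filter_upwards [ae_all_iff.2 hφz_le, hlim] with x hle hx
    exact le_of_tendsto' hx.norm hle
  refine ae_eq_of_forall_integral_inner_eq (hzlim.smul_of_norm_le_one hφ hφ_le) hh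
    fun w hw => ?_
  have hmove : ∀ (y : E) x, ⟪φ x • y, w x⟫ = ⟪y, φ x • w x⟫ := fun y x => by
    rw [real_inner_smul_left, real_inner_smul_right]
  simp only [hmove]
  refine tendsto_nhds_unique (hweak _ (hw.smul_of_norm_le_one hφ hφ_le)) ?_
  simp only [← hmove]
  refine tendsto_integral_of_dominated_convergence (fun x => C * ‖w x‖)
    (fun n => (hφ.smul (hz n).1).inner hw.1) ((hw.integrable one_le_two).norm.const_mul C)
    (fun n => ?_) (hlim.mono fun x hx => hx.inner tendsto_const_nhds)
  filter_upwards [hφz_le n] with x hx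
  exact (norm_inner_le_norm _ _).trans (mul_le_mul_of_nonneg_right hx (norm_nonneg _))

end TendstoWeakL2

end MeasureTheory

/-- Boundary version of the convergence lemma.  On a finite measure space `(Σ, μ)` with
constant `s_* ≥ 0`: if `vⁿ → v` strongly in `L²(Σ; ℝ³)`, `zⁿ := s_* vⁿ/(|vⁿ| + 1/n)` a.e.,
and `zⁿ ⇀ z` weakly in `L²(Σ; ℝ³)`, then `(|z| − s_*)⁺ + ||v| z − s_* v| = 0` a.e.
(Sequences are indexed by `n : ℕ`, the regularization parameter being `1/(n+1)`.) -/
theorem boundary_convergence_lemma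
    {S : Type*} [MeasurableSpace S] (μ : Measure S) [IsFiniteMeasure μ]
    (s : ℝ) (hs : 0 ≤ s)
    (v : ℕ → S → V3) (vlim : S → V3) (z : ℕ → S → V3) (zlim : S → V3)
    (hv_mem : ∀ n, MemLp (v n) 2 μ) (hvlim_mem : MemLp vlim 2 μ)
    (hz_mem : ∀ n, MemLp (z n) 2 μ) (hzlim_mem : MemLp zlim 2 μ)
    (hv_strong : Tendsto (fun n => eLpNorm (v n - vlim) 2 μ) atTop (𝓝 0))
    (hzn : ∀ n : ℕ, ∀ᵐ x ∂μ, z n x = (s / (‖v n x‖ + 1 / (n + 1))) • v n x)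
    (hz_weak : ∀ w : S → V3, MemLp w 2 μ →
      Tendsto (fun n => ∫ x, ⟪z n x, w x⟫ ∂μ) atTop (𝓝 (∫ x, ⟪zlim x, w x⟫ ∂μ))) :
    ∀ᵐ x ∂μ, max (‖zlim x‖ - s) 0 + ‖(‖vlim x‖) • zlim x - s • vlim x‖ = 0 := by
  have hz_le : ∀ n, ∀ᵐ x ∂μ, ‖z n x‖ ≤ s := fun n => (hzn n).mono fun x hx =>
    hx ▸ norm_div_norm_add_smul_le hs Nat.one_div_pos_of_nat _
  have hzlim_le : ∀ᵐ x ∂μ, ‖zlim x‖ ≤ s :=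
    ae_norm_le_of_forall_integral_inner_le hs hzlim_mem fun w hw =>
      TendstoWeakL2.integral_inner_le hz_weak hz_mem hz_le hw
  obtain ⟨ns, hns, hv_ae⟩ := (tendstoInMeasure_of_tendsto_eLpNorm two_ne_zero
    (fun n => (hv_mem n).1) hvlim_mem.1 hv_strong).exists_seq_tendsto_ae
  have hsub : TendstoWeakL2 atTop (fun i => z (ns i)) zlim μ :=
    TendstoWeakL2.comp hz_weak hns.tendsto_atTop
  have hε : Tendsto (fun i => 1 / ((ns i : ℝ) + 1)) atTop (𝓝 0) :=
    tendsto_one_div_add_atTop_nhds_zero_nat.comp hns.tendsto_atTop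
  have hφz := hsub.ae_smul_eq_of_tendsto (φ := fun x => ‖vlim x‖ / (1 + ‖vlim x‖))
    (h := fun x => (s / (1 + ‖vlim x‖)) • vlim x) (fun i => hz_mem _) hzlim_mem
    (fun i => hz_le _) (hvlim_mem.1.norm.aemeasurable.div
      (hvlim_mem.1.norm.aemeasurable.const_add 1)).aestronglyMeasurable
    (Eventually.of_forall fun x => norm_div_one_add_le_one (norm_nonneg _)) <| by
      filter_upwards [hv_ae, ae_all_iff.2 hzn] with x hvx hzx
      simpa only [hzx] using tendsto_smul_div_norm_add_smul (s := s) hvx hε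
  filter_upwards [hzlim_le, hφz] with x hzx hφzx
  simp [norm_smul_eq_of_div_one_add_norm_smul_eq hφzx, hzx]
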